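/- arXiv:1602.00183 — 2 statements merged into one kernel-verified Lean document; each statement's English description precedes it below -/
import Mathlib

section
/- Let h : ℝ → ℝ be four times continuously differentiable in a neighborhood of x ∈ ℝ with h'(x) ≠ 0, and set s = −(1/12)·h'''(x)/h'(x) and η = s·Δx². Then the adaptive k = 3 MQ-RBF reconstruction is fourth-order accurate: there exist C, Δx₀ > 0 such that |(−1/6 − η/6)·h̄₋ + (5/6 − (2/3)·η)·h̄₀ + (1/3 + (5/6)·η)·h̄₊ − h(x)| ≤ C·Δx⁴ for all 0 < Δx < Δx₀. -/
/-!
Let `P` be the cubic Taylor polynomial of `h` at `x`. The reconstruction is linear and its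
weights have absolute sum at most `(4 + 5|η|)/3`, so the remainder `h - P = O(|ξ - x|⁴)` costs
only `O(Δx⁴)`. On `P` the reconstruction is computed exactly: its error is
`Δx³ (h'(x) s + h'''(x)/12) + s Δx⁴ (h'''(x) Δx - h''(x)) / 6`, and the adaptive choice of `s`
makes the `Δx³` term vanish.
-/

open Set Topology Asymptotics intervalIntegral

section Taylor

variable {E : Type*} [NormedAddCommGroup E] [NormedSpace ℝ E]

theorem ContDiffAt.isLittleO_sub_taylorWithinEval {f : ℝ → E} {x : ℝ} {n : ℕ}
    (hf : ContDiffAt ℝ n f x) :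
    (fun ξ ↦ f ξ - taylorWithinEval f n univ x ξ) =o[𝓝 x] fun ξ ↦ (ξ - x) ^ n := by
  obtain ⟨u, hu, hfu⟩ := hf.contDiffOn le_rfl (by simp)
  obtain ⟨r, hr, hru⟩ := Metric.mem_nhds_iff.mp hu
  have htaylor : taylorWithinEval f n (Metric.ball x r) x = taylorWithinEval f n univ x := by
    ext ξ
    simp only [taylor_within_apply, iteratedDerivWithin_univ,
      iteratedDerivWithin_of_isOpen Metric.isOpen_ball (Metric.mem_ball_self hr)]
  simpa [htaylor, nhdsWithin_eq_nhds.mpr (Metric.ball_mem_nhds x hr)] using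
    taylor_isLittleO (convex_ball x r) (Metric.mem_ball_self hr) (hfu.mono hru)

theorem ContDiffAt.isBigO_sub_taylorWithinEval {f : ℝ → E} {x : ℝ} {n : ℕ}
    (hf : ContDiffAt ℝ (n + 1) f x) :
    (fun ξ ↦ f ξ - taylorWithinEval f n univ x ξ) =O[𝓝 x] fun ξ ↦ (ξ - x) ^ (n + 1) := by
  have hnext : (fun ξ ↦ f ξ - taylorWithinEval f (n + 1) univ x ξ) =O[𝓝 x]
      fun ξ ↦ (ξ - x) ^ (n + 1) := by
    exact_mod_cast hf.isLittleO_sub_taylorWithinEval.isBigO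
  have hterm : (fun ξ ↦ (((n + 1 : ℝ) * n.factorial)⁻¹ * (ξ - x) ^ (n + 1)) •
      iteratedDerivWithin (n + 1) f univ x) =O[𝓝 x] fun ξ ↦ (ξ - x) ^ (n + 1) := by
    refine isBigO_of_le' (c := ‖((n + 1 : ℝ) * n.factorial)⁻¹‖ *
      ‖iteratedDerivWithin (n + 1) f univ x‖) _ fun ξ ↦ ?_
    rw [norm_smul, norm_mul]
    exact le_of_eq (by ring)
  simpa [taylorWithinEval_succ, sub_add] using hnext.add hterm

theorem taylorWithinEval_three_univ (f : ℝ → ℝ) (x ξ : ℝ) :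
    taylorWithinEval f 3 univ x ξ = f x + deriv f x * (ξ - x)
      + iteratedDeriv 2 f x / 2 * (ξ - x) ^ 2 + iteratedDeriv 3 f x / 6 * (ξ - x) ^ 3 := by
  simp only [taylor_within_apply, Finset.sum_range_succ, Finset.sum_range_zero,
    iteratedDerivWithin_univ, iteratedDeriv_zero, iteratedDeriv_one, smul_eq_mul, Nat.factorial]
  push_cast
  ring

end Taylor

/-- The `k = 3`, `r = 1` MQ-RBF reconstruction at `x` from the cell averages `h̄₋, h̄₀, h̄₊` of
`f` on cells of width `d = Δx`, where `η = ε²Δx²`. -/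
noncomputable def mqrbfReconstruction (f : ℝ → ℝ) (x η d : ℝ) : ℝ :=
  (-(1 / 6) - η / 6) * ((1 / d) * ∫ ξ in (x - 2 * d)..(x - d), f ξ)
    + (5 / 6 - (2 / 3) * η) * ((1 / d) * ∫ ξ in (x - d)..x, f ξ)
    + (1 / 3 + (5 / 6) * η) * ((1 / d) * ∫ ξ in x..(x + d), f ξ)

theorem integral_cubic (a₀ a₁ a₂ a₃ a b : ℝ) :
    ∫ t in a..b, (a₀ + a₁ * t + a₂ * t ^ 2 + a₃ * t ^ 3) =
      (a₀ * b + a₁ * b ^ 2 / 2 + a₂ * b ^ 3 / 3 + a₃ * b ^ 4 / 4)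
      - (a₀ * a + a₁ * a ^ 2 / 2 + a₂ * a ^ 3 / 3 + a₃ * a ^ 4 / 4) := by
  have hint (f : ℝ → ℝ) (hf : Continuous f) : IntervalIntegrable f MeasureTheory.volume a b :=
    hf.intervalIntegrable a b
  rw [integral_add (hint _ (by fun_prop)) (hint _ (by fun_prop)),
    integral_add (hint _ (by fun_prop)) (hint _ (by fun_prop)),
    integral_add (hint _ (by fun_prop)) (hint _ (by fun_prop))]
  simp only [integral_const, integral_const_mul, integral_pow, smul_eq_mul]
  rw [integral_const_mul, integral_id]
  ring

theorem mqrbfReconstruction_cubic (x a₀ a₁ a₂ a₃ η : ℝ) {d : ℝ} (hd : d ≠ 0) :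
    mqrbfReconstruction (fun ξ ↦ a₀ + a₁ * (ξ - x) + a₂ * (ξ - x) ^ 2 + a₃ * (ξ - x) ^ 3) x η d
      = a₀ + (a₁ * d + a₃ * d ^ 3) * η - a₂ * d ^ 2 * η / 3 + a₃ * d ^ 3 / 2 := by
  simp only [mqrbfReconstruction,
    integral_comp_sub_right (fun t ↦ a₀ + a₁ * t + a₂ * t ^ 2 + a₃ * t ^ 3), integral_cubic]
  field_simp
  ring

theorem abs_one_div_mul_integral_le {g : ℝ → ℝ} {a b d M : ℝ} (hd : 0 < d) (hab : b - a = d)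
    (hg : ∀ ξ ∈ Icc a b, |g ξ| ≤ M) : |1 / d * ∫ ξ in a..b, g ξ| ≤ M := by
  have hint : ‖∫ ξ in a..b, g ξ‖ ≤ M * |b - a| := by
    refine norm_integral_le_of_norm_le_const fun ξ hξ ↦ hg ξ ?_
    rw [uIoc_of_le (by linarith)] at hξ
    exact Ioc_subset_Icc_self hξ
  rw [Real.norm_eq_abs, hab, abs_of_pos hd] at hint
  rw [abs_mul, abs_of_pos (one_div_pos.2 hd)]
  calc 1 / d * |∫ ξ in a..b, g ξ| ≤ 1 / d * (M * d) := by gcongr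
    _ = M := by field_simp

theorem mqrbfReconstruction_sub {f g : ℝ → ℝ} {x d : ℝ} (η : ℝ) (hd : 0 ≤ d)
    (hf : IntervalIntegrable f MeasureTheory.volume (x - 2 * d) (x + d))
    (hg : IntervalIntegrable g MeasureTheory.volume (x - 2 * d) (x + d)) :
    mqrbfReconstruction (fun ξ ↦ f ξ - g ξ) x η d
      = mqrbfReconstruction f x η d - mqrbfReconstruction g x η d := by
  have hcell {a b : ℝ} (ha : a ∈ Icc (x - 2 * d) (x + d)) (hb : b ∈ Icc (x - 2 * d) (x + d)) :
      ∫ ξ in a..b, (f ξ - g ξ) = (∫ ξ in a..b, f ξ) - ∫ ξ in a..b, g ξ := by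
    have hsub := uIcc_subset_uIcc (Icc_subset_uIcc ha) (Icc_subset_uIcc hb)
    exact integral_sub (hf.mono_set hsub) (hg.mono_set hsub)
  have hxd : x - d ∈ Icc (x - 2 * d) (x + d) := ⟨by linarith, by linarith⟩
  have hx : x ∈ Icc (x - 2 * d) (x + d) := ⟨by linarith, by linarith⟩
  simp only [mqrbfReconstruction]
  rw [hcell (left_mem_Icc.2 (by linarith)) hxd, hcell hxd hx,
    hcell hx (right_mem_Icc.2 (by linarith))]
  ring

theorem abs_mqrbfReconstruction_le {g : ℝ → ℝ} {x d M : ℝ} (η : ℝ) (hd : 0 < d)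
    (hg : ∀ ξ ∈ Icc (x - 2 * d) (x + d), |g ξ| ≤ M) :
    |mqrbfReconstruction g x η d| ≤ (4 + 5 * |η|) / 3 * M := by
  have hM : 0 ≤ M := (abs_nonneg _).trans (hg x ⟨by linarith, by linarith⟩)
  have hleft := abs_one_div_mul_integral_le hd (by ring)
    fun ξ (hξ : ξ ∈ Icc (x - 2 * d) (x - d)) ↦ hg ξ ⟨hξ.1, by linarith [hξ.2]⟩
  have hmid := abs_one_div_mul_integral_le hd (by ring)
    fun ξ (hξ : ξ ∈ Icc (x - d) x) ↦ hg ξ ⟨by linarith [hξ.1], by linarith [hξ.2]⟩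
  have hright := abs_one_div_mul_integral_le hd (by ring)
    fun ξ (hξ : ξ ∈ Icc x (x + d)) ↦ hg ξ ⟨by linarith [hξ.1], hξ.2⟩
  have hwl : |-(1 / 6) - η / 6| ≤ (1 + |η|) / 6 := by
    rw [abs_le]; constructor <;> linarith [le_abs_self η, neg_abs_le η]
  have hwm : |5 / 6 - (2 / 3) * η| ≤ (5 + 4 * |η|) / 6 := by
    rw [abs_le]; constructor <;> linarith [le_abs_self η, neg_abs_le η]
  have hwr : |1 / 3 + (5 / 6) * η| ≤ (2 + 5 * |η|) / 6 := by
    rw [abs_le]; constructor <;> linarith [le_abs_self η, neg_abs_le η]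
  unfold mqrbfReconstruction
  calc _ ≤ |-(1 / 6) - η / 6| * |1 / d * ∫ ξ in (x - 2 * d)..(x - d), g ξ|
        + |5 / 6 - (2 / 3) * η| * |1 / d * ∫ ξ in (x - d)..x, g ξ|
        + |1 / 3 + (5 / 6) * η| * |1 / d * ∫ ξ in x..(x + d), g ξ| := by
          simp only [← abs_mul]; exact abs_add_three _ _ _
    _ ≤ (1 + |η|) / 6 * M + (5 + 4 * |η|) / 6 * M + (2 + 5 * |η|) / 6 * M := by gcongr
    _ = (4 + 5 * |η|) / 3 * M := by ring

theorem abs_mqrbfReconstruction_sub_le {f g : ℝ → ℝ} {x r K d : ℝ} {n : ℕ} (η : ℝ)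
    (hd : 0 < d) (hdr : 2 * d < r) (hK : 0 ≤ K) (hf : ContinuousOn f (Metric.ball x r))
    (hg : ContinuousOn g (Metric.ball x r))
    (hfg : ∀ ξ ∈ Metric.ball x r, |f ξ - g ξ| ≤ K * |ξ - x| ^ n) :
    |mqrbfReconstruction f x η d - mqrbfReconstruction g x η d|
      ≤ (4 + 5 * |η|) / 3 * (K * (2 * d) ^ n) := by
  have hnear : ∀ ξ ∈ Icc (x - 2 * d) (x + d), |ξ - x| ≤ 2 * d :=
    fun ξ hξ ↦ abs_le.2 ⟨by linarith [hξ.1], by linarith [hξ.2]⟩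
  have hcells : uIcc (x - 2 * d) (x + d) ⊆ Metric.ball x r := by
    intro ξ hξ
    rw [uIcc_of_le (by linarith)] at hξ
    rw [Metric.mem_ball, Real.dist_eq]
    linarith [hnear ξ hξ]
  have hint {u : ℝ → ℝ} (hu : ContinuousOn u (Metric.ball x r)) :
      IntervalIntegrable u MeasureTheory.volume (x - 2 * d) (x + d) :=
    (hu.mono hcells).intervalIntegrable
  rw [← mqrbfReconstruction_sub η hd.le (hint hf) (hint hg)]
  refine abs_mqrbfReconstruction_le η hd fun ξ hξ ↦ ?_
  calc |f ξ - g ξ| ≤ K * |ξ - x| ^ n := hfg ξ (hcells (Icc_subset_uIcc hξ))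
    _ ≤ K * (2 * d) ^ n := by gcongr; exact hnear ξ hξ

/-- With `a₁ = h'`, `a₃ = h'''/6` and `s = ε²`, `hs` is the adaptation condition
`ε²h' + h'''/12 = 0`, which cancels the `d³` term. -/
theorem abs_mqrbfReconstruction_cubic_sub_le {x a₀ a₁ a₂ a₃ s d : ℝ}
    (hs : a₁ * s + a₃ / 2 = 0) (hd : 0 < d) (hd₁ : d ≤ 1) :
    |mqrbfReconstruction (fun ξ ↦ a₀ + a₁ * (ξ - x) + a₂ * (ξ - x) ^ 2 + a₃ * (ξ - x) ^ 3)
        x (s * d ^ 2) d - a₀| ≤ |s| * (|a₂| + |a₃|) * d ^ 4 := by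
  have hcancel : mqrbfReconstruction
      (fun ξ ↦ a₀ + a₁ * (ξ - x) + a₂ * (ξ - x) ^ 2 + a₃ * (ξ - x) ^ 3) x (s * d ^ 2) d - a₀
      = s * d ^ 4 * (a₃ * d - a₂ / 3) := by
    rw [mqrbfReconstruction_cubic _ _ _ _ _ _ hd.ne']
    linear_combination d ^ 3 * hs
  have hbracket : |a₃ * d - a₂ / 3| ≤ |a₂| + |a₃| := by
    have ha₃d : |a₃ * d| ≤ |a₃| := by
      rw [abs_mul, abs_of_pos hd]
      exact mul_le_of_le_one_right (abs_nonneg a₃) hd₁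
    rw [abs_le]
    constructor <;> linarith [le_abs_self (a₃ * d), neg_abs_le (a₃ * d), le_abs_self a₂,
      neg_abs_le a₂, abs_nonneg a₃]
  rw [hcancel, abs_mul, abs_mul, abs_of_pos (by positivity : (0 : ℝ) < d ^ 4)]
  calc |s| * d ^ 4 * |a₃ * d - a₂ / 3| ≤ |s| * d ^ 4 * (|a₂| + |a₃|) := by gcongr
    _ = |s| * (|a₂| + |a₃|) * d ^ 4 := by ring

/-- With the adaptive shape parameter `s = −(1/12)h'''(x)/h'(x)` the k = 3
MQ-RBF reconstruction (central stencil) is fourth-order accurate. -/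
theorem stmt_15 (h : ℝ → ℝ) (x : ℝ) (hh : ContDiffAt ℝ 4 h x)
    (hx : deriv h x ≠ 0) :
    ∃ C > 0, ∃ d₀ > 0, ∀ d : ℝ, 0 < d → d < d₀ →
      |(-(1 / 6) - (-(1 / 12) * iteratedDeriv 3 h x / deriv h x) * d ^ 2 / 6)
            * ((1 / d) * ∫ ξ in (x - 2 * d)..(x - d), h ξ)
          + (5 / 6 - (2 / 3) * ((-(1 / 12) * iteratedDeriv 3 h x / deriv h x) * d ^ 2))
            * ((1 / d) * ∫ ξ in (x - d)..x, h ξ)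
          + (1 / 3 + (5 / 6) * ((-(1 / 12) * iteratedDeriv 3 h x / deriv h x) * d ^ 2))
            * ((1 / d) * ∫ ξ in x..(x + d), h ξ)
          - h x|
        ≤ C * d ^ 4 := by
  set c₂ := iteratedDeriv 2 h x
  set c₃ := iteratedDeriv 3 h x
  set s := -(1 / 12) * c₃ / deriv h x with hs
  set P : ℝ → ℝ := fun ξ ↦ h x + deriv h x * (ξ - x) + c₂ / 2 * (ξ - x) ^ 2 + c₃ / 6 * (ξ - x) ^ 3
  have hadapted : deriv h x * s + c₃ / 6 / 2 = 0 := by rw [hs]; field_simp; ring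
  obtain ⟨K, hK, hbigO⟩ :=
    (ContDiffAt.isBigO_sub_taylorWithinEval (n := 3) (by exact_mod_cast hh)).exists_pos
  obtain ⟨r, hr, hloc⟩ :=
    Metric.eventually_nhds_iff_ball.1 (hbigO.bound.and (hh.eventually (by simp)))
  simp only [taylorWithinEval_three_univ, Real.norm_eq_abs, abs_pow] at hloc
  refine ⟨(4 + 5 * |s|) / 3 * (K * 2 ^ 4) + |s| * (|c₂ / 2| + |c₃ / 6|), by positivity,
    min 1 (r / 2), by positivity, fun d hd hd₀ ↦ ?_⟩
  have hd₁ : d ≤ 1 := hd₀.le.trans (min_le_left _ _)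
  have hη : |s * d ^ 2| ≤ |s| := by
    rw [abs_mul, abs_of_nonneg (sq_nonneg d)]
    exact mul_le_of_le_one_right (abs_nonneg s) (by nlinarith)
  have hrem := (abs_mqrbfReconstruction_sub_le (s * d ^ 2) hd
    (by linarith [hd₀.trans_le (min_le_right _ _)]) hK.le
    (fun ξ hξ ↦ (hloc ξ hξ).2.continuousAt.continuousWithinAt)
    (by fun_prop : Continuous P).continuousOn fun ξ hξ ↦ (hloc ξ hξ).1).trans
    (by gcongr : _ ≤ (4 + 5 * |s|) / 3 * (K * (2 * d) ^ 4))
  have hcubic :=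
    abs_mqrbfReconstruction_cubic_sub_le hadapted hd hd₁ (x := x) (a₀ := h x) (a₂ := c₂ / 2)
  show |mqrbfReconstruction h x (s * d ^ 2) d - h x| ≤ _
  calc |mqrbfReconstruction h x (s * d ^ 2) d - h x|
      ≤ |mqrbfReconstruction h x (s * d ^ 2) d - mqrbfReconstruction P x (s * d ^ 2) d|
        + |mqrbfReconstruction P x (s * d ^ 2) d - h x| := abs_sub_le _ _ _
    _ ≤ _ := add_le_add hrem hcubic
    _ = _ := by ring
end

section
/- Let h : ℝ → ℝ be three times continuously differentiable in a neighborhood of x ∈ ℝ and let s ∈ ℝ be fixed; set η = s·Δx². Then the one-sided k = 2 MQ-RBF reconstruction (stencil shifted one cell to the left, r = 1) satisfies (−1/2 + η/2)·h̄₋ + (3/2 − (3/2)·η)·h̄₀ = h(x) − (s·h(x) + (1/3)·h''(x))·Δx² + O(Δx³). -/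
/-!
By Taylor's theorem `h = P + R` near `x`, with `P` the quadratic Taylor polynomial at `x` and
`R ξ = O((ξ - x)³)`, so every cell average of `R` is `O(Δx³)`. The cell averages of `P` are
explicit; the MQ-RBF weights cancel their linear terms and combine them into
`h x - (s h x + h'' x / 3) Δx² + s h'' x Δx⁴ / 3`. Since the weights stay bounded as `Δx → 0`,
the error is `O(Δx³)`.
-/

open Filter Topology Asymptotics MeasureTheory

theorem ContDiffAt.isBigO_sub_taylor {f : ℝ → ℝ} {x₀ : ℝ} {n : ℕ}
    (hf : ContDiffAt ℝ (n + 1) f x₀) :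
    (fun x => f x - ∑ k ∈ Finset.range (n + 1), iteratedDeriv k f x₀ / k.factorial * (x - x₀) ^ k)
      =O[𝓝 x₀] fun x => (x - x₀) ^ (n + 1) := by
  obtain ⟨u, hu, hfu⟩ := hf.contDiffOn le_rfl (by simp)
  obtain ⟨ε, hε, hball⟩ := Metric.mem_nhds_iff.1 hu
  have hlo := taylor_isLittleO (convex_ball x₀ ε) (Metric.mem_ball_self hε) (hfu.mono hball)
  rw [nhdsWithin_eq_nhds.2 (Metric.ball_mem_nhds x₀ hε)] at hlo
  have hcoeff (k : ℕ) : iteratedDerivWithin k f (Metric.ball x₀ ε) x₀ = iteratedDeriv k f x₀ :=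
    iteratedDerivWithin_of_isOpen Metric.isOpen_ball (Metric.mem_ball_self hε)
  refine (hlo.isBigO.add ((isBigO_refl (fun x => (x - x₀) ^ (n + 1)) _).const_mul_left
    (iteratedDeriv (n + 1) f x₀ / (n + 1).factorial))).congr_left fun x => ?_
  simp only [taylorWithinEval_succ, taylor_within_apply, hcoeff, smul_eq_mul]
  rw [Finset.sum_congr rfl fun k _ => (div_mul_eq_mul_div _ _ _).trans (by ring :
    iteratedDeriv k f x₀ * (x - x₀) ^ k / k.factorial
      = (k.factorial : ℝ)⁻¹ * (x - x₀) ^ k * iteratedDeriv k f x₀)]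
  push_cast [Nat.factorial_succ]
  ring

theorem Asymptotics.IsBigO.one_div_mul_integral {R : ℝ → ℝ} {x : ℝ} {n : ℕ}
    (hR : R =O[𝓝 x] fun ξ => (ξ - x) ^ n) (a b : ℝ) :
    (fun d => (1 / d) * ∫ ξ in (x + a * d)..(x + b * d), R ξ) =O[𝓝 0] fun d => d ^ n := by
  obtain ⟨c, hc, hcR⟩ := hR.exists_pos
  obtain ⟨ε, hε, hnear⟩ := Metric.eventually_nhds_iff.1 hcR.bound
  set M := |a| + |b| + 1
  have hM : 0 < M := by positivity
  refine IsBigO.of_bound (c * M ^ n * |b - a|) ?_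
  filter_upwards [Metric.ball_mem_nhds 0 (div_pos hε hM)] with d hd
  rw [Metric.mem_ball, Real.dist_eq, sub_zero, lt_div_iff₀ hM] at hd
  rcases eq_or_ne d 0 with rfl | hd0
  · simp only [div_zero, zero_mul, norm_zero]
    positivity
  have hpt : ∀ ξ ∈ Set.uIoc (x + a * d) (x + b * d), ‖R ξ‖ ≤ c * (M * |d|) ^ n := by
    intro ξ hξ
    have hMd : M * |d| = |a * d| + |b * d| + |d| := by simp only [M, abs_mul]; ring
    have hξx : |ξ - x| ≤ M * |d| := by
      rw [hMd, abs_le]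
      rcases Set.mem_uIcc.1 (Set.uIoc_subset_uIcc hξ) with h | h <;> constructor <;>
        linarith [abs_nonneg d, le_abs_self (a * d), neg_abs_le (a * d), le_abs_self (b * d),
          neg_abs_le (b * d), h.1, h.2]
    calc ‖R ξ‖ ≤ c * ‖(ξ - x) ^ n‖ := hnear (by rw [Real.dist_eq]; linarith [mul_comm M |d|])
      _ ≤ c * (M * |d|) ^ n := by
        rw [norm_pow, Real.norm_eq_abs]
        gcongr
  have hd_abs : |d| ≠ 0 := abs_ne_zero.2 hd0
  calc ‖(1 / d) * ∫ ξ in (x + a * d)..(x + b * d), R ξ‖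
      ≤ |d|⁻¹ * (c * (M * |d|) ^ n * |x + b * d - (x + a * d)|) := by
        rw [norm_mul, norm_div, norm_one, Real.norm_eq_abs, one_div]
        gcongr
        exact intervalIntegral.norm_integral_le_of_norm_le_const hpt
    _ = c * M ^ n * |b - a| * ‖d ^ n‖ := by
        rw [show x + b * d - (x + a * d) = (b - a) * d by ring, abs_mul, norm_pow,
          Real.norm_eq_abs]
        field_simp
        rw [mul_pow]
        ring

theorem eventually_intervalIntegrable_cell {f : ℝ → ℝ} {x : ℝ}
    (hf : ∀ᶠ y in 𝓝 x, ContinuousAt f y) (a b : ℝ) :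
    ∀ᶠ d in 𝓝 0, IntervalIntegrable f volume (x + a * d) (x + b * d) := by
  obtain ⟨ε, hε, hball⟩ := Metric.eventually_nhds_iff_ball.1 hf
  have hcell (c : ℝ) : ∀ᶠ d in 𝓝 0, x + c * d ∈ Metric.ball x ε := by
    have : Tendsto (fun d : ℝ => x + c * d) (𝓝 0) (𝓝 x) := by
      simpa using (by fun_prop : Continuous fun d : ℝ => x + c * d).tendsto 0
    exact this (Metric.ball_mem_nhds x hε)
  filter_upwards [hcell a, hcell b] with d ha hb
  exact ContinuousOn.intervalIntegrable fun y hy =>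
    (hball y ((convex_ball x ε).ordConnected.uIcc_subset ha hb hy)).continuousWithinAt

theorem integral_quadratic (c₀ c₁ c₂ x u v : ℝ) :
    ∫ ξ in u..v, (c₀ + c₁ * (ξ - x) + c₂ * (ξ - x) ^ 2) =
      c₀ * (v - u) + c₁ / 2 * ((v - x) ^ 2 - (u - x) ^ 2)
        + c₂ / 3 * ((v - x) ^ 3 - (u - x) ^ 3) := by
  have hF (ξ : ℝ) : HasDerivAt (fun ξ => c₀ * ξ + c₁ / 2 * (ξ - x) ^ 2 + c₂ / 3 * (ξ - x) ^ 3)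
      (c₀ + c₁ * (ξ - x) + c₂ * (ξ - x) ^ 2) ξ := by
    have hlin := (hasDerivAt_id' ξ).sub_const x
    refine ((((hasDerivAt_id' ξ).const_mul c₀).fun_add
      ((hlin.fun_pow 2).const_mul (c₁ / 2))).fun_add
      ((hlin.fun_pow 3).const_mul (c₂ / 3))).congr_deriv ?_
    push_cast
    ring
  rw [intervalIntegral.integral_eq_sub_of_hasDerivAt (fun ξ _ => hF ξ)
    ((by fun_prop : Continuous _).intervalIntegrable _ _)]
  ring

theorem mqrbf_error_eq_remainder_averages {h : ℝ → ℝ} {x d s c₁ c₂ : ℝ} (hd : d ≠ 0)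
    (hintL : IntervalIntegrable h volume (x - 2 * d) (x - d))
    (hintR : IntervalIntegrable h volume (x - d) x) :
    (-(1 / 2) + s * d ^ 2 / 2) * ((1 / d) * ∫ ξ in (x - 2 * d)..(x - d), h ξ)
        + (3 / 2 - (3 / 2) * (s * d ^ 2)) * ((1 / d) * ∫ ξ in (x - d)..x, h ξ)
        - h x + (s * h x + (1 / 3) * c₂) * d ^ 2
      = (-(1 / 2) + s * d ^ 2 / 2) * ((1 / d) *
            ∫ ξ in (x - 2 * d)..(x - d), (h ξ - (h x + c₁ * (ξ - x) + c₂ / 2 * (ξ - x) ^ 2)))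
        + (3 / 2 - (3 / 2) * (s * d ^ 2)) * ((1 / d) *
            ∫ ξ in (x - d)..x, (h ξ - (h x + c₁ * (ξ - x) + c₂ / 2 * (ξ - x) ^ 2)))
        + s * c₂ / 3 * d ^ 4 := by
  have hpoly : Continuous fun ξ => h x + c₁ * (ξ - x) + c₂ / 2 * (ξ - x) ^ 2 := by fun_prop
  rw [intervalIntegral.integral_sub hintL (hpoly.intervalIntegrable _ _),
    intervalIntegral.integral_sub hintR (hpoly.intervalIntegrable _ _),
    integral_quadratic, integral_quadratic]
  field_simp
  ring

theorem exists_pos_bound_of_isBigO_nhdsGT {f : ℝ → ℝ} {m : ℕ}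
    (hf : f =O[𝓝[>] 0] fun d => d ^ m) :
    ∃ C > 0, ∃ d₀ > 0, ∀ d : ℝ, 0 < d → d < d₀ → |f d| ≤ C * d ^ m := by
  obtain ⟨C, hC, hCf⟩ := hf.exists_pos
  obtain ⟨d₀, hd₀, hsub⟩ := mem_nhdsGT_iff_exists_Ioo_subset.1 hCf.bound
  refine ⟨C, hC, d₀, hd₀, fun d hd hdd₀ => ?_⟩
  simpa [abs_of_pos hd] using hsub ⟨hd, hdd₀⟩

/-- The one-sided (r = 1) k = 2 MQ-RBF reconstruction:
`(−1/2 + η/2)h̄₋ + (3/2 − 3η/2)h̄₀ = h(x) − (s·h(x) + (1/3)h''(x))Δx² + O(Δx³)`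
with `η = sΔx²`. -/
theorem stmt_17 (h : ℝ → ℝ) (x : ℝ) (hh : ContDiffAt ℝ 3 h x) (s : ℝ) :
    ∃ C > 0, ∃ d₀ > 0, ∀ d : ℝ, 0 < d → d < d₀ →
      |(-(1 / 2) + s * d ^ 2 / 2) * ((1 / d) * ∫ ξ in (x - 2 * d)..(x - d), h ξ)
          + (3 / 2 - (3 / 2) * (s * d ^ 2)) * ((1 / d) * ∫ ξ in (x - d)..x, h ξ)
          - h x + (s * h x + (1 / 3) * iteratedDeriv 2 h x) * d ^ 2|
        ≤ C * d ^ 3 := by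
  set R : ℝ → ℝ := fun ξ =>
    h ξ - (h x + deriv h x * (ξ - x) + iteratedDeriv 2 h x / 2 * (ξ - x) ^ 2)
  have hR : R =O[𝓝 x] fun ξ => (ξ - x) ^ 3 := by
    simpa [R, Finset.sum_range_succ] using hh.isBigO_sub_taylor (n := 2)
  have hL : (fun d => (1 / d) * ∫ ξ in (x - 2 * d)..(x - d), R ξ) =O[𝓝 0] fun d => d ^ 3 := by
    convert hR.one_div_mul_integral (-2) (-1) using 4 <;> ring
  have h0 : (fun d => (1 / d) * ∫ ξ in (x - d)..x, R ξ) =O[𝓝 0] fun d => d ^ 3 := by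
    convert hR.one_div_mul_integral (-1) 0 using 4 <;> ring
  have hcont : ∀ᶠ y in 𝓝 x, ContinuousAt h y :=
    (hh.eventually (by simp)).mono fun _ hy => hy.continuousAt
  have hint : ∀ᶠ d in 𝓝 0, IntervalIntegrable h volume (x - 2 * d) (x - d) ∧
      IntervalIntegrable h volume (x - d) x := by
    filter_upwards [eventually_intervalIntegrable_cell hcont (-2) (-1),
      eventually_intervalIntegrable_cell hcont (-1) 0] with d hcellL hcellR
    exact ⟨by convert hcellL using 1 <;> ring, by convert hcellR using 1 <;> ring⟩
  have hweighted (a b : ℝ) {F : ℝ → ℝ} (hF : F =O[𝓝 0] fun d => d ^ 3) :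
      (fun d => (a + b * d ^ 2) * F d) =O[𝓝 0] fun d => d ^ 3 := by
    have hbdd := ((by fun_prop : Continuous fun d : ℝ => a + b * d ^ 2).tendsto 0).isBigO_one ℝ
    simpa using hbdd.mul hF
  have hquartic : (fun d : ℝ => s * iteratedDeriv 2 h x / 3 * d ^ 4) =O[𝓝 0] fun d => d ^ 3 :=
    (isLittleO_pow_pow (by norm_num : 3 < 4)).isBigO.const_mul_left _
  have hbound :=
    ((hweighted (-(1 / 2)) (s / 2) hL).add (hweighted (3 / 2) (-(3 / 2) * s) h0)).add hquartic
  apply exists_pos_bound_of_isBigO_nhdsGT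
  refine (hbound.mono nhdsWithin_le_nhds).congr' ?_ .rfl
  filter_upwards [self_mem_nhdsWithin, nhdsWithin_le_nhds hint] with d hd ⟨hintL, hintR⟩
  rw [mqrbf_error_eq_remainder_averages (c₁ := deriv h x) hd.ne' hintL hintR]
  ring
end
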